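/- Let k ≥ 1 and let A_k be the companion matrix of the core polynomial X^k − t₁X^{k−1} − ⋯ − t_k over ℤ[t₁,…,t_k], i.e., the k×k matrix with (A_k)_{i,i+1} = 1 for 1 ≤ i ≤ k−1, last row (t_k, t_{k−1}, …, t₁), and all other entries 0. Then for every n ≥ 0, the trace of the n-th power of A_k equals the generalized Lucas polynomial: tr(A_kⁿ) = G_{k,n} (with G_{k,0} = k). -/
import Mathlib


open Finset MvPolynomial

/-- The set of partitions `α ⊢ n` with parts at most `k`, encoded as tuples
`α = (α₁, …, α_k) ∈ ℕ^k` (0-indexed) with `∑ j, (j+1)·α_j = n`. -/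
def partitions (k n : ℕ) : Finset (Fin k → ℕ) :=
  (Fintype.piFinset fun _ : Fin k => Finset.range (n + 1)).filter
    fun α => ∑ j : Fin k, (j.1 + 1) * α j = n

/-- The generalized Lucas polynomial
`G_{k,n} = ∑_{α ⊢ n} (|α|!/(α₁!⋯α_k!))·(n/|α|)·t^α` for `n ≥ 1`, and `G_{k,0} = k`.
Its coefficients are integers; it is written here in `ℚ[t₁,…,t_k]`. -/
noncomputable def G (k n : ℕ) : MvPolynomial (Fin k) ℚ :=
  if n = 0 then (k : MvPolynomial (Fin k) ℚ)
  else
    ∑ α ∈ partitions k n,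
      C ((Nat.multinomial Finset.univ α : ℚ) * ((n : ℚ) / ((∑ i, α i : ℕ) : ℚ))) *
        ∏ j, X j ^ α j

/-- The variable `t_{m+1}` of `ℤ[t₁,…,t_k]` (0-indexed), with the convention
`t_j = 0` for `j > k`. -/
noncomputable def tZ (k m : ℕ) : MvPolynomial (Fin k) ℤ :=
  if h : m < k then X ⟨m, h⟩ else 0

/-- The companion matrix of the core polynomial `X^k - t₁X^{k-1} - ⋯ - t_k`:
`(A_k)_{i,i+1} = 1` for `1 ≤ i ≤ k-1`, last row `(t_k, t_{k-1}, …, t₁)`,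
and all other entries `0` (0-indexed here). -/
noncomputable def Amat (k : ℕ) : Matrix (Fin k) (Fin k) (MvPolynomial (Fin k) ℤ) :=
  fun i j =>
    if i.1 = k - 1 then tZ k (k - 1 - j.1)
    else if j.1 = i.1 + 1 then 1
    else 0

lemma mem_partitions {k n : ℕ} {α : Fin k → ℕ} :
    α ∈ partitions k n ↔ ∑ j : Fin k, (j.1 + 1) * α j = n := by
  simp only [partitions, mem_filter, Fintype.mem_piFinset, mem_range]
  refine ⟨fun h => h.2, fun h => ⟨fun j => ?_, h⟩⟩
  have h1 : (j.1 + 1) * α j ≤ n := h ▸ Finset.single_le_sum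
    (f := fun j : Fin k => (j.1 + 1) * α j) (fun _ _ => Nat.zero_le _) (mem_univ j)
  nlinarith [α j]

lemma partitions_zero (k : ℕ) : partitions k 0 = {0} := by
  ext α
  simp only [mem_partitions, mem_singleton]
  constructor
  · intro h
    funext j
    have := (Finset.sum_eq_zero_iff.mp h) j (mem_univ j)
    simpa using this
  · rintro rfl; simp

noncomputable def uu (k : ℕ) (m : ℤ) : MvPolynomial (Fin k) ℚ :=
  if 0 ≤ m then
    ∑ α ∈ partitions k m.toNat, C (Nat.multinomial Finset.univ α : ℚ) * ∏ j, X j ^ α j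
  else 0

lemma uu_neg {k : ℕ} {m : ℤ} (h : m < 0) : uu k m = 0 := by
  simp [uu, not_le.mpr h]

lemma uu_ofNat (k : ℕ) (n : ℕ) :
    uu k n = ∑ α ∈ partitions k n, C (Nat.multinomial Finset.univ α : ℚ) * ∏ j, X j ^ α j := by
  simp [uu]

lemma uu_zero (k : ℕ) : uu k 0 = 1 := by
  have h0 : uu k (0:ℤ) = uu k ((0:ℕ):ℤ) := by norm_num
  rw [h0, uu_ofNat, partitions_zero]
  have := Nat.multinomial_spec (Finset.univ : Finset (Fin k)) (0 : Fin k → ℕ)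
  simp at this
  simp [this]

open Nat

-- key factorial identity
lemma multinomial_shift {k : ℕ} (β : Fin k → ℕ) (s : Fin k) :
    (Nat.multinomial Finset.univ (β + Pi.single s 1) : ℚ) * (β s + 1) =
      (Nat.multinomial Finset.univ β : ℚ) * ((∑ i, β i : ℕ) + 1) := by
  set γ : Fin k → ℕ := β + Pi.single s 1 with hγ
  have hupd : γ = Function.update β s (β s + 1) := by
    funext j
    by_cases hj : j = s
    · subst hj; simp [hγ]
    · simp [hγ, Function.update, hj, Pi.single_apply]
  have h1 := Nat.multinomial_spec (Finset.univ : Finset (Fin k)) β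
  have h2 := Nat.multinomial_spec (Finset.univ : Finset (Fin k)) γ
  have hsum : ∑ i : Fin k, γ i = (∑ i : Fin k, β i) + 1 := by
    simp [hγ, Finset.sum_add_distrib, Pi.single_apply]
  have hprod : ∏ i : Fin k, (γ i)! = (β s + 1) * ∏ i : Fin k, (β i)! := by
    have e1 : ∏ i : Fin k, (γ i)! = (γ s)! * ∏ i ∈ Finset.univ.erase s, (γ i)! :=
      (Finset.mul_prod_erase Finset.univ _ (mem_univ s)).symm
    have e2 : ∏ i : Fin k, (β i)! = (β s)! * ∏ i ∈ Finset.univ.erase s, (β i)! :=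
      (Finset.mul_prod_erase Finset.univ _ (mem_univ s)).symm
    have e3 : ∏ i ∈ Finset.univ.erase s, (γ i)! = ∏ i ∈ Finset.univ.erase s, (β i)! := by
      refine Finset.prod_congr rfl fun i hi => ?_
      have : i ≠ s := (Finset.mem_erase.mp hi).1
      simp [hγ, Pi.single_apply, this]
    have e4 : γ s = β s + 1 := by simp [hγ]
    rw [e1, e3, e4, Nat.factorial_succ, e2]
    ring
  rw [hsum, hprod, Nat.factorial_succ] at h2
  clear hupd
  have h1q : ((∏ i : Fin k, (β i)! : ℕ) : ℚ) * (Nat.multinomial Finset.univ β : ℚ)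
      = (((∑ i : Fin k, β i)! : ℕ) : ℚ) := by exact_mod_cast congrArg (Nat.cast : ℕ → ℚ) h1
  have h2q : ((β s : ℚ) + 1) * ((∏ i : Fin k, (β i)! : ℕ) : ℚ) * (Nat.multinomial Finset.univ γ : ℚ)
      = (((∑ i : Fin k, β i : ℕ) : ℚ) + 1) * (((∑ i : Fin k, β i)! : ℕ) : ℚ) := by
    exact_mod_cast congrArg (Nat.cast : ℕ → ℚ) h2
  have hP : ((∏ i : Fin k, (β i)! : ℕ) : ℚ) ≠ 0 := by
    exact_mod_cast (Finset.prod_pos fun i _ => Nat.factorial_pos _).ne'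
  apply mul_left_cancel₀ hP
  linear_combination h2q - (((∑ i : Fin k, β i : ℕ) : ℚ) + 1) * h1q

-- consequence: removing one part
lemma multinomial_remove {k : ℕ} (α : Fin k → ℕ) (s : Fin k) (hs : 1 ≤ α s) :
    (Nat.multinomial Finset.univ (α - Pi.single s 1) : ℚ) * ((∑ i, α i : ℕ) : ℚ) =
      (Nat.multinomial Finset.univ α : ℚ) * (α s : ℚ) := by
  set β : Fin k → ℕ := α - Pi.single s 1 with hβ
  have hα : α = β + Pi.single s 1 := by
    funext j
    by_cases hj : j = s
    · subst hj; simp [hβ, Pi.single_apply]; omega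
    · simp [hβ, Pi.single_apply, hj]
  have hsum : (∑ i : Fin k, α i) = (∑ i : Fin k, β i) + 1 := by
    rw [hα]; simp [Finset.sum_add_distrib, Pi.single_apply]
  have hαs : α s = β s + 1 := by rw [hα]; simp [Pi.single_apply]
  rw [hsum, hαs, hα]
  exact_mod_cast (multinomial_shift β s).symm

lemma weight_add_single {k : ℕ} (s : Fin k) (γ : Fin k → ℕ) :
    ∑ j : Fin k, (j.1 + 1) * ((γ + Pi.single s 1 : Fin k → ℕ) j) = (∑ j : Fin k, (j.1 + 1) * γ j) + (s.1 + 1) := by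
  have : ∀ j : Fin k, (j.1 + 1) * ((γ + Pi.single s 1 : Fin k → ℕ) j)
      = (j.1 + 1) * γ j + (if j = s then j.1 + 1 else 0) := by
    intro j
    by_cases hj : j = s <;> simp [hj, Pi.single_apply, Nat.mul_add]
  rw [Finset.sum_congr rfl fun j _ => this j, Finset.sum_add_distrib, Finset.sum_ite_eq' univ s]
  simp

lemma filter_partitions_empty {k n : ℕ} (s : Fin k) (hs : n < s.1 + 1) :
    (partitions k n).filter (fun α => 1 ≤ α s) = ∅ := by
  rw [Finset.filter_eq_empty_iff]
  intro α hα hs1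
  have hsum := mem_partitions.mp hα
  have : (s.1 + 1) * α s ≤ n := hsum ▸ Finset.single_le_sum
    (f := fun j : Fin k => (j.1 + 1) * α j) (fun _ _ => Nat.zero_le _) (mem_univ s)
  nlinarith

lemma partitions_shift_sum {k n : ℕ} (s : Fin k) (hs : s.1 + 1 ≤ n) {M : Type*} [AddCommMonoid M]
    (f : (Fin k → ℕ) → M) :
    ∑ α ∈ (partitions k n).filter (fun α => 1 ≤ α s), f α
      = ∑ β ∈ partitions k (n - (s.1 + 1)), f (β + Pi.single s 1) := by
  refine Finset.sum_nbij' (i := fun α => α - Pi.single s 1) (j := fun β => β + Pi.single s 1)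
    ?_ ?_ ?_ ?_ ?_
  · intro α hα
    rw [mem_filter] at hα
    obtain ⟨hα, hαs⟩ := hα
    have hrec : α = (α - Pi.single s 1) + Pi.single s 1 := by
      funext j
      by_cases hj : j = s
      · subst hj; simp [Pi.single_apply]; omega
      · simp [Pi.single_apply, hj]
    rw [mem_partitions]
    show ∑ j : Fin k, (j.1 + 1) * ((α - Pi.single s 1 : Fin k → ℕ) j) = n - (s.1 + 1)
    have := weight_add_single s (α - Pi.single s 1)
    rw [← hrec] at this
    have hn := mem_partitions.mp hα
    omega
  · intro β hβ
    rw [mem_filter, mem_partitions, weight_add_single]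
    have hn := mem_partitions.mp hβ
    constructor
    · omega
    · simp [Pi.single_apply]
  · intro α hα
    rw [mem_filter] at hα
    funext j
    by_cases hj : j = s
    · subst hj; simp [Pi.single_apply]; omega
    · simp [Pi.single_apply, hj]
  · intro β hβ
    funext j
    by_cases hj : j = s
    · subst hj; simp [Pi.single_apply]
    · simp [Pi.single_apply, hj]
  · intro α hα
    rw [mem_filter] at hα
    congr 1
    funext j
    by_cases hj : j = s
    · subst hj; simp [Pi.single_apply]; omega
    · simp [Pi.single_apply, hj]

lemma main_reindex {k n : ℕ} (w : (Fin k → ℕ) → ℚ) (c : Fin k → ℚ)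
    (hw : ∀ α ∈ partitions k n, w α = ∑ s ∈ Finset.univ.filter (fun s => 1 ≤ α s),
      c s * (Nat.multinomial Finset.univ (α - Pi.single s 1) : ℚ)) :
    ∑ α ∈ partitions k n, C (w α) * ∏ j, X j ^ α j
      = ∑ s : Fin k, C (c s) * (X s * uu k ((n : ℤ) - (s.1 + 1))) := by
  have step1 : ∑ α ∈ partitions k n, C (w α) * ∏ j, X j ^ α j
      = ∑ α ∈ partitions k n, ∑ s ∈ Finset.univ.filter (fun s => 1 ≤ α s),
          C (c s * (Nat.multinomial Finset.univ (α - Pi.single s 1) : ℚ)) * ∏ j, X j ^ α j := by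
    refine Finset.sum_congr rfl fun α hα => ?_
    rw [hw α hα, map_sum, Finset.sum_mul]
  rw [step1]
  have step2 : ∀ α ∈ partitions k n, (∑ s ∈ Finset.univ.filter (fun s => 1 ≤ α s),
          C (c s * (Nat.multinomial Finset.univ (α - Pi.single s 1) : ℚ)) * ∏ j, X j ^ α j)
      = ∑ s : Fin k, (if 1 ≤ α s then
          C (c s * (Nat.multinomial Finset.univ (α - Pi.single s 1) : ℚ)) * ∏ j, X j ^ α j else 0) := by
    intro α _
    rw [Finset.sum_filter]
  rw [Finset.sum_congr rfl step2, Finset.sum_comm]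
  refine Finset.sum_congr rfl fun s _ => ?_
  rw [← Finset.sum_filter]
  by_cases hs : s.1 + 1 ≤ n
  · refine Eq.trans (partitions_shift_sum s hs
      (f := fun α => C (c s * (Nat.multinomial Finset.univ (α - Pi.single s 1) : ℚ)) * ∏ j, X j ^ α j)) ?_
    have hz : ((n : ℤ) - (s.1 + 1)) = ((n - (s.1 + 1) : ℕ) : ℤ) := by omega
    rw [hz, uu_ofNat, Finset.mul_sum, Finset.mul_sum]
    refine Finset.sum_congr rfl fun β hβ => ?_
    have hcancel : (β + Pi.single s 1 : Fin k → ℕ) - Pi.single s 1 = β := by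
      funext j
      simp [Pi.sub_apply, Pi.add_apply]
    have hX : ∏ j, (X j : MvPolynomial (Fin k) ℚ) ^ ((β + Pi.single s 1 : Fin k → ℕ) j)
        = X s * ∏ j, X j ^ β j := by
      have : ∀ j : Fin k, (X j : MvPolynomial (Fin k) ℚ) ^ ((β + Pi.single s 1 : Fin k → ℕ) j)
          = (if j = s then X j else 1) * X j ^ β j := by
        intro j
        by_cases hj : j = s <;> simp [hj, Pi.single_apply, pow_add, pow_succ, mul_comm]
      rw [Finset.prod_congr rfl fun j _ => this j, Finset.prod_mul_distrib,
        Finset.prod_ite_eq' Finset.univ s]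
      simp
    rw [hcancel, hX, map_mul]
    ring
  · rw [filter_partitions_empty s (by omega), Finset.sum_empty, uu_neg (by omega)]
    simp

lemma sum_parts_ne_zero {k n : ℕ} (hn : 1 ≤ n) {α : Fin k → ℕ} (hα : α ∈ partitions k n) :
    ((∑ i, α i : ℕ) : ℚ) ≠ 0 := by
  have h := mem_partitions.mp hα
  rw [Nat.cast_ne_zero]
  intro h0
  have : ∀ i : Fin k, α i = 0 := by
    intro i
    have := Finset.sum_eq_zero_iff.mp h0 i (mem_univ i)
    exact this
  rw [Finset.sum_congr rfl fun j _ => by rw [this j]] at h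
  simp at h
  omega

lemma uu_rec (k n : ℕ) (hn : 1 ≤ n) :
    uu k n = ∑ s : Fin k, X s * uu k ((n : ℤ) - (s.1 + 1)) := by
  rw [uu_ofNat]
  have := main_reindex (k := k) (n := n) (fun α => (Nat.multinomial Finset.univ α : ℚ)) (fun _ => 1) ?_
  · rw [this]
    simp
  · intro α hα
    have hS := sum_parts_ne_zero hn hα
    apply mul_right_cancel₀ hS
    rw [Finset.sum_mul]
    have key : ∀ s ∈ Finset.univ.filter (fun s => 1 ≤ α s),
        1 * (Nat.multinomial Finset.univ (α - Pi.single s 1) : ℚ) * ((∑ i, α i : ℕ) : ℚ)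
          = (Nat.multinomial Finset.univ α : ℚ) * (α s : ℚ) := by
      intro s hs
      rw [one_mul]
      exact multinomial_remove α s (Finset.mem_filter.mp hs).2
    rw [Finset.sum_congr rfl key, ← Finset.mul_sum]
    congr 1
    have hnat : ∑ s ∈ Finset.univ.filter (fun s => 1 ≤ α s), α s = ∑ i, α i :=
      Finset.sum_filter_of_ne fun s _ h => by omega
    push_cast
    exact_mod_cast hnat.symm

lemma G_rec (k n : ℕ) (hn : 1 ≤ n) :
    G k n = ∑ s : Fin k, C ((s.1 : ℚ) + 1) * (X s * uu k ((n : ℤ) - (s.1 + 1))) := by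
  rw [G, if_neg (by omega)]
  refine main_reindex (k := k) (n := n)
    (fun α => (Nat.multinomial Finset.univ α : ℚ) * ((n : ℚ) / ((∑ i, α i : ℕ) : ℚ)))
    (fun s => (s.1 : ℚ) + 1) ?_
  intro α hα
  have hS := sum_parts_ne_zero hn hα
  apply mul_right_cancel₀ hS
  rw [Finset.sum_mul]
  have key : ∀ s ∈ Finset.univ.filter (fun s => 1 ≤ α s),
      ((s.1 : ℚ) + 1) * (Nat.multinomial Finset.univ (α - Pi.single s 1) : ℚ) * ((∑ i, α i : ℕ) : ℚ)
        = (Nat.multinomial Finset.univ α : ℚ) * (((s.1 : ℚ) + 1) * (α s : ℚ)) := by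
    intro s hs
    have := multinomial_remove α s (Finset.mem_filter.mp hs).2
    ring_nf
    ring_nf at this
    nlinarith [this]
  rw [Finset.sum_congr rfl key, ← Finset.mul_sum]
  have hw : ∑ s ∈ Finset.univ.filter (fun s => 1 ≤ α s), ((s.1 : ℚ) + 1) * (α s : ℚ) = (n : ℚ) := by
    have hnat : ∑ s ∈ Finset.univ.filter (fun s => 1 ≤ α s), (s.1 + 1) * α s = n := by
      rw [Finset.sum_filter_of_ne (p := fun s => 1 ≤ α s)
        (fun s _ h => Nat.pos_of_ne_zero fun h0 => h (by simp [h0]))]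
      exact mem_partitions.mp hα
    calc ∑ s ∈ Finset.univ.filter (fun s => 1 ≤ α s), ((s.1 : ℚ) + 1) * (α s : ℚ)
        = ((∑ s ∈ Finset.univ.filter (fun s => 1 ≤ α s), (s.1 + 1) * α s : ℕ) : ℚ) := by
          push_cast; rfl
      _ = (n : ℚ) := by rw [hnat]
  rw [hw, mul_assoc, div_mul_cancel₀ _ hS]

noncomputable def Tq (k s : ℕ) : MvPolynomial (Fin k) ℚ :=
  if h : s < k then X ⟨s, h⟩ else 0

noncomputable def Bq (k : ℕ) : Matrix (Fin k) (Fin k) (MvPolynomial (Fin k) ℚ) :=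
  fun i j =>
    if i.1 = k - 1 then Tq k (k - 1 - j.1)
    else if j.1 = i.1 + 1 then 1
    else 0

lemma uu_rec' (k n : ℕ) (hn : 1 ≤ n) :
    uu k (n : ℤ) = ∑ s ∈ Finset.range k, Tq k s * uu k ((n : ℤ) - ((s : ℤ) + 1)) := by
  rw [uu_rec k n hn]
  rw [← Fin.sum_univ_eq_sum_range (fun s => Tq k s * uu k ((n : ℤ) - ((s:ℤ) + 1))) k]
  refine Finset.sum_congr rfl fun s _ => ?_
  rw [Tq, dif_pos s.2]

lemma uu_neg_succ (k s : ℕ) : uu k (-((s:ℤ)+1)) = 0 := uu_neg (by omega)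

lemma sum_range_k_split (k : ℕ) (hk : 1 ≤ k) {R : Type*} [AddCommMonoid R] (f : ℕ → R) :
    ∑ s ∈ Finset.range k, f s = (∑ s ∈ Finset.range (k-1), f s) + f (k-1) := by
  rw [show Finset.range k = Finset.range ((k-1)+1) by congr 1; omega, Finset.sum_range_succ]

lemma Bq_pow (k : ℕ) (hk : 1 ≤ k) (n : ℕ) (i : Fin k) : ∀ j : Fin k,
    ((Bq k)^n) i j = uu k ((n : ℤ) + (i.1 : ℤ) - (j.1 : ℤ))
      - ∑ s ∈ Finset.range (k-1-j.1), Tq k s * uu k ((n : ℤ) + (i.1 : ℤ) - (j.1 : ℤ) - ((s:ℤ)+1)) := by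
  induction n with
  | zero =>
    intro j
    rw [pow_zero]
    simp only [Nat.cast_zero, zero_add]
    rcases lt_trichotomy i.1 j.1 with hlt | heq | hgt
    · have hij : i ≠ j := fun h => by subst h; omega
      rw [Matrix.one_apply_ne hij]
      rw [uu_neg (show (i.1 : ℤ) - (j.1 : ℤ) < 0 by omega)]
      rw [Finset.sum_eq_zero fun s hs => by
        rw [uu_neg (show (i.1 : ℤ) - (j.1 : ℤ) - ((s:ℤ)+1) < 0 by omega), mul_zero]]
      ring
    · have hij : i = j := Fin.ext heq
      subst hij
      rw [Matrix.one_apply_eq]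
      rw [show (i.1 : ℤ) - (i.1 : ℤ) = 0 by ring, uu_zero]
      rw [Finset.sum_eq_zero fun s hs => by
        rw [show (0:ℤ) - ((s:ℤ)+1) = -((s:ℤ)+1) by ring, uu_neg_succ, mul_zero]]
      ring
    · have hij : i ≠ j := fun h => by subst h; omega
      rw [Matrix.one_apply_ne hij]
      rw [show (i.1 : ℤ) - (j.1 : ℤ) = ((i.1 - j.1 : ℕ) : ℤ) by omega]
      rw [uu_rec' k (i.1 - j.1) (by omega)]
      rw [eq_comm, sub_eq_zero, eq_comm]
      refine Finset.sum_subset (Finset.range_subset_range.mpr (by omega)) ?_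
      intro s hs hns
      simp only [Finset.mem_range] at hs hns
      rw [uu_neg (show ((i.1 - j.1 : ℕ) : ℤ) - ((s:ℤ)+1) < 0 by omega), mul_zero]
  | succ n ih =>
    intro j
    have last_lt : k - 1 < k := by omega
    set last : Fin k := ⟨k-1, last_lt⟩ with hlast
    rw [pow_succ, Matrix.mul_apply]
    rw [Finset.sum_congr rfl (fun l _ => by rw [ih l])]
    rw [← Finset.add_sum_erase _ _ (Finset.mem_univ last)]
    have hBlast : Bq k last j = Tq k (k - 1 - j.1) := by
      simp [Bq, hlast]
    have hFlast : uu k ((n : ℤ) + (i.1 : ℤ) - (last.1 : ℤ))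
        - ∑ s ∈ Finset.range (k-1-last.1), Tq k s * uu k ((n : ℤ) + (i.1 : ℤ) - (last.1 : ℤ) - ((s:ℤ)+1))
        = uu k ((n : ℤ) + (i.1 : ℤ) - ((k:ℤ)-1)) := by
      rw [show (last.1 : ℤ) = (k:ℤ)-1 by rw [hlast]; push_cast [Nat.cast_sub hk]; ring]
      rw [show k - 1 - last.1 = 0 from by show k - 1 - (k-1) = 0; omega]
      simp
    rw [hBlast, hFlast]
    by_cases hj0 : j.1 = 0
    · rw [Finset.sum_eq_zero (fun l hl => ?_)]
      swap
      · have hlk : l.1 ≠ k - 1 := by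
          intro h
          exact (Finset.mem_erase.mp hl).1 (Fin.ext (by simp [hlast, h]))
        have : Bq k l j = 0 := by
          simp only [Bq, if_neg hlk]
          rw [if_neg (by omega)]
        rw [this, mul_zero]
      rw [add_zero, hj0]
      simp only [Nat.sub_zero, Nat.cast_zero, sub_zero]
      rw [show (↑(n+1) + (↑↑i:ℤ)) = ((n+1+i.1 : ℕ) : ℤ) by push_cast; ring]
      rw [uu_rec' k (n+1+i.1) (by omega)]
      rw [sum_range_k_split k hk (f := fun s => Tq k s * uu k (((n+1+i.1:ℕ):ℤ) - ((s:ℤ)+1)))]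
      rw [show (((n+1+i.1:ℕ):ℤ) - (((k-1:ℕ):ℤ)+1)) = ↑n + (↑↑i:ℤ) - ((k:ℤ)-1) by omega]
      ring
    · have hj2 : j.1 < k := j.2
      have hjp_lt : j.1 - 1 < k := by omega
      set jp : Fin k := ⟨j.1 - 1, hjp_lt⟩ with hjp
      have h2 : ∑ l ∈ Finset.univ.erase last,
          (uu k ((n : ℤ) + (i.1 : ℤ) - (l.1 : ℤ))
            - ∑ s ∈ Finset.range (k-1-l.1), Tq k s * uu k ((n : ℤ) + (i.1 : ℤ) - (l.1 : ℤ) - ((s:ℤ)+1)))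
            * Bq k l j
          = (uu k ((n : ℤ) + (i.1 : ℤ) - ((j.1 - 1 : ℕ) : ℤ))
            - ∑ s ∈ Finset.range (k-1-(j.1-1)), Tq k s * uu k ((n : ℤ) + (i.1 : ℤ) - ((j.1 - 1 : ℕ) : ℤ) - ((s:ℤ)+1)))
            * Bq k jp j := by
        refine Finset.sum_eq_single jp ?_ ?_
        · intro b hb hbne
          have hbk : b.1 ≠ k - 1 := by
            intro h
            exact (Finset.mem_erase.mp hb).1 (Fin.ext (by simp [hlast, h]))
          have : Bq k b j = 0 := by
            simp only [Bq, if_neg hbk]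
            rw [if_neg (by
              intro h
              exact hbne (Fin.ext (by simp [hjp]; omega)))]
          rw [this, mul_zero]
        · intro h
          exact absurd (Finset.mem_erase.mpr ⟨Fin.ne_of_val_ne (by simp [hjp, hlast]; omega), Finset.mem_univ _⟩) h
      rw [h2]
      have hBjp : Bq k jp j = 1 := by
        simp only [Bq, hjp]
        rw [if_neg (by omega), if_pos (by omega)]
      rw [hBjp, mul_one]
      rw [show k-1-(j.1-1) = (k-1-j.1)+1 by omega, Finset.sum_range_succ]
      rw [show ((n:ℤ) + (↑↑i:ℤ) - ((j.1-1 : ℕ):ℤ)) = (↑(n+1) + ↑↑i - (↑↑j:ℤ)) by omega]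
      rw [show ((↑(n+1) + ↑↑i - (↑↑j:ℤ)) - (((k-1-j.1 : ℕ):ℤ)+1)) = ↑n + (↑↑i:ℤ) - ((k:ℤ)-1) by omega]
      ring

lemma trace_Bq (k : ℕ) (hk : 1 ≤ k) (n : ℕ) (hn : 1 ≤ n) :
    Matrix.trace ((Bq k)^n)
      = ∑ s ∈ Finset.range k, ((s+1 : ℕ) : MvPolynomial (Fin k) ℚ)
          * (Tq k s * uu k ((n:ℤ) - ((s:ℤ)+1))) := by
  set g : ℕ → MvPolynomial (Fin k) ℚ := fun s => Tq k s * uu k ((n:ℤ) - ((s:ℤ)+1)) with hg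
  have htr : Matrix.trace ((Bq k)^n)
      = ∑ i : Fin k, (uu k (n:ℤ) - ∑ s ∈ Finset.range (k-1-i.1), g s) := by
    rw [Matrix.trace]
    refine Finset.sum_congr rfl fun i _ => ?_
    rw [Matrix.diag]
    rw [Bq_pow k hk n i i]
    rw [show ((n:ℤ) + (i.1:ℤ) - (i.1:ℤ)) = (n:ℤ) by ring]
  rw [htr, Finset.sum_sub_distrib, Finset.sum_const, Finset.card_univ, Fintype.card_fin]
  have hD : ∑ i : Fin k, ∑ s ∈ Finset.range (k-1-i.1), g s
      = ∑ s ∈ Finset.range k, (k-1-s) • g s := by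
    rw [Fin.sum_univ_eq_sum_range (fun i => ∑ s ∈ Finset.range (k-1-i), g s) k]
    have ha : ∀ i ∈ Finset.range k, ∑ s ∈ Finset.range (k-1-i), g s
        = ∑ s ∈ Finset.range k, if s < k-1-i then g s else 0 := by
      intro i _
      rw [← Finset.sum_filter]
      congr 1
      ext x
      simp only [Finset.mem_filter, Finset.mem_range]
      omega
    rw [Finset.sum_congr rfl ha, Finset.sum_comm]
    refine Finset.sum_congr rfl fun s hs => ?_
    rw [← Finset.sum_filter, Finset.sum_const]
    congr 1
    rw [show (Finset.range k).filter (fun i => s < k-1-i) = Finset.range (k-1-s) by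
      ext x; simp only [Finset.mem_filter, Finset.mem_range]; omega]
    exact Finset.card_range _
  rw [hD, uu_rec' k n hn, ← hg]
  have : ∀ f : ℕ → MvPolynomial (Fin k) ℚ, (∑ s ∈ Finset.range k, f s) = ∑ s ∈ Finset.range k, f s := fun _ => rfl
  rw [Finset.smul_sum, ← Finset.sum_sub_distrib]
  refine Finset.sum_congr rfl fun s hs => ?_
  rw [Finset.mem_range] at hs
  have hc : ((k - 1 - s : ℕ) : MvPolynomial (Fin k) ℚ) + ((s+1 : ℕ) : MvPolynomial (Fin k) ℚ)
      = (k : MvPolynomial (Fin k) ℚ) := by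
    rw [← Nat.cast_add]
    congr 1
    omega
  rw [nsmul_eq_mul, nsmul_eq_mul, ← hc]
  ring

theorem trace_pow_companion_eq_G (k : ℕ) (hk : 1 ≤ k) (n : ℕ) :
    MvPolynomial.map (Int.castRingHom ℚ) (Matrix.trace ((Amat k) ^ n)) = G k n := by
  have hmap : MvPolynomial.map (Int.castRingHom ℚ) (Matrix.trace ((Amat k) ^ n))
      = Matrix.trace ((Bq k) ^ n) := by
    have h1 : (Amat k).map (MvPolynomial.map (Int.castRingHom ℚ)) = Bq k := by
      ext i j
      simp only [Matrix.map_apply, Amat, Bq]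
      unfold tZ Tq
      split_ifs <;> simp
    have h2 : ((Amat k) ^ n).map (MvPolynomial.map (Int.castRingHom ℚ)) = (Bq k) ^ n := by
      rw [← h1, ← RingHom.mapMatrix_apply, ← RingHom.mapMatrix_apply, map_pow]
    rw [← h2]
    simp [Matrix.trace, Matrix.diag, map_sum, Matrix.map_apply]
  rw [hmap]
  rcases Nat.eq_zero_or_pos n with hn | hn
  · subst hn
    rw [pow_zero, Matrix.trace_one, G, if_pos rfl]
    simp
  · rw [trace_Bq k hk n hn, G_rec k n hn]
    rw [← Fin.sum_univ_eq_sum_range (fun s => ((s+1 : ℕ) : MvPolynomial (Fin k) ℚ)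
      * (Tq k s * uu k ((n:ℤ) - ((s:ℤ)+1)))) k]
    refine Finset.sum_congr rfl fun s _ => ?_
    have hT : Tq k s.1 = X s := by
      rw [Tq, dif_pos s.2]
    rw [hT]
    have hC : ((s.1 + 1 : ℕ) : MvPolynomial (Fin k) ℚ) = C ((s.1 : ℚ) + 1) := by
      rw [show ((s.1 : ℚ) + 1) = ((s.1 + 1 : ℕ) : ℚ) by push_cast; ring, map_natCast C]
    rw [hC]
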